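/- arXiv:2511.18246 — 5 statements merged into one kernel-verified Lean document; each statement's English description precedes it below -/
import Mathlib

section
/- Let n ≥ 3 be odd, let s be an integer with s² ≡ 1 (mod n), and let G = ⟨x, y : x² = yⁿ = 1_G, y x = x y^s⟩ be the metacyclic group of order 2n. Write n = n₁n₂ with s ≡ −1 (mod n₁), s ≡ 1 (mod n₂) and gcd(n₁, n₂) = 1. Let S be a sequence over G of length n₂ such that π(S) is a singleton set. If π(S) ⊆ ⟨y^{n₂}⟩ and S has at least one term in the coset x⟨y⟩, then π(S) = {1_G}. -/
/-- `piSet S` is the set of all products of the terms of the sequence (multiset) `S`,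
taken over all possible orderings of its terms. -/
def piSet {G : Type*} [Group G] (S : Multiset G) : Set G :=
  {g | ∃ l : List G, (l : Multiset G) = S ∧ l.prod = g}

theorem stmt5 {G : Type*} [Group G] [Fintype G] (n n₁ n₂ : ℕ)
    (hn : 3 ≤ n) (hodd : Odd n) (s : ℤ) (hs : s ^ 2 ≡ 1 [ZMOD (n : ℤ)])
    (hfac : n = n₁ * n₂) (hs1 : s ≡ -1 [ZMOD (n₁ : ℤ)]) (hs2 : s ≡ 1 [ZMOD (n₂ : ℤ)])
    (hcop : Nat.gcd n₁ n₂ = 1)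
    (x y : G) (hcard : Fintype.card G = 2 * n)
    (hx : x ^ 2 = 1) (hy : y ^ n = 1)
    (hgen : Subgroup.closure {x, y} = ⊤)
    (hrel : y * x = x * y ^ s)
    (S : Multiset G) (hS : Multiset.card S = n₂)
    (hsingle : ∃ g : G, piSet S = {g})
    (hsub : piSet S ⊆ (Subgroup.zpowers (y ^ n₂) : Set G))
    (hterm : ∃ g ∈ S, ∃ k : ℤ, g = x * y ^ k) :
    piSet S = {(1 : G)} := by
  obtain ⟨g₀, hg₀⟩ := hsingle
  obtain ⟨c, hcS, k, hck⟩ := hterm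
  obtain ⟨T, hT⟩ := Multiset.exists_cons_of_mem hcS
  set L := T.toList with hLdef
  have hLT : (L : Multiset G) = T := Multiset.coe_toList T
  -- the product with c first and c last both equal g₀
  have h1 : c * L.prod = g₀ := by
    have h : (c :: L).prod ∈ piSet S := ⟨c :: L, by rw [hT, ← hLT]; rfl, rfl⟩
    rw [hg₀, Set.mem_singleton_iff, List.prod_cons] at h
    exact h
  have h2 : L.prod * c = g₀ := by
    have hco : ((L ++ [c] : List G) : Multiset G) = S := by
      rw [hT, ← hLT]
      simp [Multiset.cons_swap]
    have h : (L ++ [c]).prod ∈ piSet S := ⟨L ++ [c], hco, rfl⟩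
    rw [hg₀, Set.mem_singleton_iff, List.prod_append, List.prod_singleton] at h
    exact h
  have hcomm : c * g₀ = g₀ * c := by
    calc c * g₀ = c * L.prod * c := by rw [← h2, mul_assoc]
      _ = g₀ * c := by rw [h1]
  -- g₀ = y ^ m with m = n₂ * j
  have hg₀mem : g₀ ∈ Subgroup.zpowers (y ^ n₂) := by
    have : g₀ ∈ piSet S := by rw [hg₀]; exact Set.mem_singleton _
    exact hsub this
  obtain ⟨j, hj⟩ := Subgroup.mem_zpowers_iff.mp hg₀mem
  set m : ℤ := (n₂ : ℤ) * j with hm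
  have hg₀m : g₀ = y ^ m := by
    rw [← hj, hm, zpow_mul, zpow_natCast]
  -- x is an involution
  have hxinv : x⁻¹ = x := by
    have : x * x = 1 := by rw [← pow_two, hx]
    exact inv_eq_of_mul_eq_one_right this
  -- conjugation relation for arbitrary integer powers
  have hconj : ∀ t : ℤ, y ^ t * x = x * y ^ (s * t) := by
    intro t
    have hbase : x⁻¹ * y * x = y ^ s := by
      rw [mul_assoc, hrel, inv_mul_cancel_left]
    have h3 : x⁻¹ * y ^ t * x = y ^ (s * t) := by
      have := @conj_zpow G _ t x⁻¹ y
      rw [inv_inv] at this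
      rw [← this, hbase, ← zpow_mul]
    calc y ^ t * x = x * (x⁻¹ * y ^ t * x) := by
          rw [← mul_assoc, ← mul_assoc, mul_inv_cancel, one_mul]
      _ = x * y ^ (s * t) := by rw [h3]
  -- derive y ^ ((1 - s) * m) = 1 from the commutation
  have hkey : y ^ ((1 - s) * m) = 1 := by
    have e1 : x * (y ^ k * y ^ m) = x * (y ^ (s * m) * y ^ k) := by
      calc x * (y ^ k * y ^ m) = (x * y ^ k) * g₀ := by rw [hg₀m, mul_assoc]
        _ = g₀ * (x * y ^ k) := by rw [← hck, hcomm]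
        _ = (y ^ m * x) * y ^ k := by rw [hg₀m, mul_assoc]
        _ = x * (y ^ (s * m) * y ^ k) := by rw [hconj m, mul_assoc]
    have e2 : y ^ (k + m) = y ^ (s * m + k) := by
      rw [zpow_add, zpow_add]
      exact mul_left_cancel e1
    have e3 : y ^ ((k + m) - (s * m + k)) = 1 := by
      rw [zpow_sub, e2, mul_inv_cancel]
    have : (k + m) - (s * m + k) = (1 - s) * m := by ring
    rwa [this] at e3
  -- number theory: n₁ is coprime to 1 - s
  have hn₁odd : Odd n₁ := by
    rw [hfac, Nat.odd_mul] at hodd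
    exact hodd.1
  have hn₁s : (n₁ : ℤ) ∣ s + 1 := by
    have hd := hs1.dvd
    have : s + 1 = -(-1 - s) := by ring
    rw [this]
    exact dvd_neg.mpr hd
  have hcop' : IsCoprime (n₁ : ℤ) (1 - s) := by
    rw [Int.isCoprime_iff_gcd_eq_one]
    set e := Int.gcd (n₁ : ℤ) (1 - s) with he
    have he1 : (e : ℤ) ∣ (n₁ : ℤ) := Int.gcd_dvd_left _ _
    have he2 : (e : ℤ) ∣ 1 - s := Int.gcd_dvd_right _ _
    have he3 : (e : ℤ) ∣ 2 := by
      have h' : (e : ℤ) ∣ (1 - s) + (s + 1) := dvd_add he2 (he1.trans hn₁s)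
      have h'' : (1 - s) + (s + 1) = 2 := by ring
      rwa [h''] at h'
    have he4 : e ∣ 2 := by exact_mod_cast he3
    have he5 : e ∣ n₁ := by exact_mod_cast he1
    rcases (Nat.dvd_prime Nat.prime_two).mp he4 with h | h
    · exact h
    · exfalso
      rw [h] at he5
      rw [Nat.odd_iff] at hn₁odd
      omega
  obtain ⟨u, v, huv⟩ := hcop'
  -- conclude y ^ m = 1
  have hyn : y ^ ((n : ℕ) : ℤ) = 1 := by rw [zpow_natCast, hy]
  have hexp : m = ((n : ℕ) : ℤ) * (u * j) + ((1 - s) * m) * v := by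
    calc m = (u * (n₁ : ℤ) + v * (1 - s)) * m := by rw [huv, one_mul]
      _ = ((n : ℕ) : ℤ) * (u * j) + ((1 - s) * m) * v := by
          rw [hfac, hm]; push_cast; ring
  have hfin : y ^ m = 1 := by
    rw [hexp, zpow_add, zpow_mul y ((n : ℕ) : ℤ) (u * j),
      zpow_mul y ((1 - s) * m) v, hyn, hkey]
    simp
  rw [hg₀, hg₀m, hfin]
end

section
/- Let n ≥ 3 be odd, let s be an integer with s² ≡ 1 (mod n), and let G = ⟨x, y : x² = yⁿ = 1_G, y x = x y^s⟩ be the metacyclic group of order 2n. Write n = n₁n₂ with s ≡ −1 (mod n₁), s ≡ 1 (mod n₂) and gcd(n₁, n₂) = 1. Let S be a sequence over G of length n₂ such that π(S) is a singleton set. If π(S) ⊆ x⟨y^{n₂}⟩, then there exists k ≥ 1 and integers β₁, …, β_{n₂} such that S = xy^{β₁}·…·xy^{β_{2k−1}}·y^{β_{2k}}·…·y^{β_{n₂}}, where β₁ ≡ β₂ ≡ ⋯ ≡ β_{2k−1} (mod n₁) and β_{2k} ≡ ⋯ ≡ β_{n₂} ≡ 0 (mod n₁); moreover π(S) = {x y^{β₁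 + t n₁}} for some integer t with β₁ + t n₁ ≡ 0 (mod n₂). -/
section Aux
variable {G : Type*} [Group G] (x y : G) (s : ℤ)

lemma aux_xinv (hx : x ^ 2 = 1) : x⁻¹ = x := by
  have : x * x = 1 := by rw [← pow_two]; exact hx
  exact inv_eq_of_mul_eq_one_right this

lemma aux_conj (hx : x ^ 2 = 1) (hrel : y * x = x * y ^ s) (a : ℤ) :
    y ^ a * x = x * y ^ (s * a) := by
  have hinv := aux_xinv x hx
  have h1 : x * y ^ s * x⁻¹ = y := by
    rw [hrel.symm, hinv, mul_assoc, ← pow_two, hx, mul_one]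
  have h2 : x * (y ^ s) ^ a * x⁻¹ = y ^ a := by
    rw [← conj_zpow, h1]
  rw [← zpow_mul] at h2
  rw [← h2]
  group

lemma aux_powx (hx : x ^ 2 = 1) (hrel : y * x = x * y ^ s) (L : ℕ) (a : ℤ) :
    y ^ a * x ^ L = x ^ L * y ^ (s ^ L * a) := by
  induction L with
  | zero => simp
  | succ L ih =>
    rw [pow_succ, ← mul_assoc, ih, mul_assoc, aux_conj x y s hx hrel, ← mul_assoc,
      ← pow_succ]
    congr 1
    ring

lemma aux_form (hx : x ^ 2 = 1) (hrel : y * x = x * y ^ s)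
    (hgen : Subgroup.closure {x, y} = ⊤) (g : G) :
    (∃ a : ℤ, g = y ^ a) ∨ (∃ a : ℤ, g = x * y ^ a) := by
  have hxx : x * x = 1 := by rw [← pow_two]; exact hx
  have hmem : g ∈ Subgroup.closure ({x, y} : Set G) := by rw [hgen]; exact Subgroup.mem_top g
  induction hmem using Subgroup.closure_induction with
  | mem z hz =>
    rcases hz with rfl | rfl
    · exact Or.inr ⟨0, by simp⟩
    · exact Or.inl ⟨1, by simp⟩
  | one => exact Or.inl ⟨0, by simp⟩
  | mul g h _ _ ihg ihh =>
    rcases ihg with ⟨a, rfl⟩ | ⟨a, rfl⟩ <;> rcases ihh with ⟨b, rfl⟩ | ⟨b, rfl⟩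
    · exact Or.inl ⟨a + b, by rw [zpow_add]⟩
    · refine Or.inr ⟨s * a + b, ?_⟩
      rw [← mul_assoc, aux_conj x y s hx hrel, mul_assoc, ← zpow_add]
    · exact Or.inr ⟨a + b, by rw [mul_assoc, ← zpow_add]⟩
    · refine Or.inl ⟨s * a + b, ?_⟩
      have h : y ^ a * (x * y ^ b) = x * y ^ (s * a + b) := by
        rw [← mul_assoc, aux_conj x y s hx hrel, mul_assoc, ← zpow_add]
      rw [mul_assoc, h, ← mul_assoc, hxx, one_mul]
  | inv g _ ihg =>
    rcases ihg with ⟨a, rfl⟩ | ⟨a, rfl⟩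
    · exact Or.inl ⟨-a, by rw [← zpow_neg]⟩
    · refine Or.inr ⟨s * (-a), ?_⟩
      rw [mul_inv_rev, ← zpow_neg, aux_xinv x hx, aux_conj x y s hx hrel]

lemma aux_order [Fintype G] (n : ℕ) (hn : 0 < n) (hcard : Fintype.card G = 2 * n)
    (hx : x ^ 2 = 1) (hy : y ^ n = 1) (hrel : y * x = x * y ^ s)
    (hgen : Subgroup.closure {x, y} = ⊤) : orderOf y = n := by
  have hd : orderOf y ∣ n := orderOf_dvd_of_pow_eq_one hy
  have hd0 : 0 < orderOf y := orderOf_pos y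
  set d := orderOf y with hdd
  have key : ∀ a : ℤ, ∃ j : Fin d, y ^ a = y ^ (j : ℕ) := by
    intro a
    have h1 : 0 ≤ a % (d : ℤ) := Int.emod_nonneg a (by exact_mod_cast hd0.ne')
    have h2 : a % (d : ℤ) < d := Int.emod_lt_of_pos a (by exact_mod_cast hd0)
    refine ⟨⟨(a % (d : ℤ)).toNat, by omega⟩, ?_⟩
    have h3 : y ^ (a % (d : ℤ)) = y ^ a := zpow_mod_orderOf y a
    rw [← h3]
    rw [← zpow_natCast]
    congr 1
    simp [Int.toNat_of_nonneg h1]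
  have hsurj : Function.Surjective
      (fun p : Fin 2 × Fin d => x ^ (p.1 : ℕ) * y ^ (p.2 : ℕ)) := by
    intro g
    rcases aux_form x y s hx hrel hgen g with ⟨a, rfl⟩ | ⟨a, rfl⟩
    · obtain ⟨j, hj⟩ := key a
      exact ⟨(0, j), by simp [← hj]⟩
    · obtain ⟨j, hj⟩ := key a
      exact ⟨(1, j), by simp [← hj]⟩
  have hle := Fintype.card_le_of_surjective _ hsurj
  simp only [Fintype.card_prod, Fintype.card_fin, hcard] at hle
  have : n ≤ d := by omega
  exact Nat.le_antisymm (Nat.le_of_dvd hn hd) this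

lemma aux_xny [Fintype G] (n : ℕ) (hn : 0 < n) (hcard : Fintype.card G = 2 * n)
    (hx : x ^ 2 = 1) (hy : y ^ n = 1) (hrel : y * x = x * y ^ s)
    (hgen : Subgroup.closure {x, y} = ⊤) : x ∉ Subgroup.zpowers y := by
  intro hxy
  have htop : Subgroup.zpowers y = ⊤ := by
    rw [eq_top_iff, ← hgen]
    rw [Subgroup.closure_le]
    intro g hg
    rcases hg with rfl | rfl
    · exact hxy
    · exact Subgroup.mem_zpowers _
  have h2 : n = 2 * n := by
    calc n = orderOf y := (aux_order x y s n hn hcard hx hy hrel hgen).symm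
    _ = Nat.card (Subgroup.zpowers y) := (Nat.card_zpowers y).symm
    _ = Nat.card G := by rw [htop]; exact Subgroup.card_top
    _ = 2 * n := by rw [Nat.card_eq_fintype_card, hcard]
  omega

lemma aux_prody (B : List ℤ) : (B.map (fun b => y ^ b)).prod = y ^ B.sum := by
  induction B with
  | nil => simp
  | cons b B ih => simp [ih, zpow_add]

lemma aux_prodx (n₁ : ℕ) (hs1 : s ≡ -1 [ZMOD (n₁ : ℤ)])
    (hx : x ^ 2 = 1) (hrel : y * x = x * y ^ s) (α : ℤ) :
    ∀ A : List ℤ, (∀ a ∈ A, a ≡ α [ZMOD (n₁ : ℤ)]) →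
    ∃ c : ℤ, (A.map (fun a => x * y ^ a)).prod = x ^ A.length * y ^ c ∧
      c ≡ (if Odd A.length then α else 0) [ZMOD (n₁ : ℤ)] := by
  intro A
  induction A with
  | nil => intro _; exact ⟨0, by simp, by simp⟩
  | cons a A ih =>
    intro hA
    obtain ⟨c, hc, hcong⟩ := ih (fun a' ha' => hA a' (List.mem_cons_of_mem _ ha'))
    refine ⟨s ^ A.length * a + c, ?_, ?_⟩
    · rw [List.map_cons, List.prod_cons, hc, ← mul_assoc, mul_assoc x (y ^ a),
        aux_powx x y s hx hrel A.length a, ← mul_assoc, ← pow_succ', List.length_cons,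
        mul_assoc, ← zpow_add]
    · have hspow : s ^ A.length ≡ (-1) ^ A.length [ZMOD (n₁ : ℤ)] := hs1.pow _
      have haα := hA a List.mem_cons_self
      simp only [List.length_cons, Nat.odd_add_one]
      rcases Nat.even_or_odd A.length with he | ho
      · rw [if_pos (Nat.not_odd_iff_even.mpr he)]
        rw [if_neg (Nat.not_odd_iff_even.mpr he)] at hcong
        have h1 : (-1 : ℤ) ^ A.length = 1 := he.neg_one_pow
        calc s ^ A.length * a + c ≡ (-1) ^ A.length * a + 0 [ZMOD (n₁ : ℤ)] :=
              Int.ModEq.add (hspow.mul_right a) hcong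
          _ = a := by rw [h1]; ring
          _ ≡ α [ZMOD (n₁ : ℤ)] := haα
      · rw [if_neg (not_not_intro ho)]
        rw [if_pos ho] at hcong
        have h1 : (-1 : ℤ) ^ A.length = -1 := ho.neg_one_pow
        calc s ^ A.length * a + c ≡ (-1) ^ A.length * a + α [ZMOD (n₁ : ℤ)] :=
              Int.ModEq.add (hspow.mul_right a) hcong
          _ = -α + α + (α - a) := by rw [h1]; ring
          _ ≡ -α + α + 0 [ZMOD (n₁ : ℤ)] := by
              have : α - a ≡ α - α [ZMOD (n₁ : ℤ)] := haα.sub_left α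
              simpa using Int.ModEq.add_left (-α + α) this
          _ = 0 := by ring

end Aux

lemma aux_map_range {α : Type*} {M : Type*} (g : α → M) (d : α) :
    ∀ l : List α, (List.range l.length).map (fun i => g (l.getD i d)) = l.map g := by
  intro l
  induction l with
  | nil => simp
  | cons a l ih =>
    rw [List.length_cons, List.range_succ_eq_map, List.map_cons, List.map_map, List.map_cons]
    congr 1

theorem stmt6 {G : Type*} [Group G] [Fintype G] (n n₁ n₂ : ℕ)
    (hn : 3 ≤ n) (hodd : Odd n) (s : ℤ) (hs : s ^ 2 ≡ 1 [ZMOD (n : ℤ)])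
    (hfac : n = n₁ * n₂) (hs1 : s ≡ -1 [ZMOD (n₁ : ℤ)]) (hs2 : s ≡ 1 [ZMOD (n₂ : ℤ)])
    (hcop : Nat.gcd n₁ n₂ = 1)
    (x y : G) (hcard : Fintype.card G = 2 * n)
    (hx : x ^ 2 = 1) (hy : y ^ n = 1)
    (hgen : Subgroup.closure {x, y} = ⊤)
    (hrel : y * x = x * y ^ s)
    (S : Multiset G) (hS : Multiset.card S = n₂)
    (hsingle : ∃ g : G, piSet S = {g})
    (hsub : piSet S ⊆ (fun h => x * h) '' (Subgroup.zpowers (y ^ n₂) : Set G)) :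
    ∃ k : ℕ, 1 ≤ k ∧ 2 * k - 1 ≤ n₂ ∧ ∃ β : ℕ → ℤ,
      S = ((List.range n₂).map
            (fun i => if i < 2 * k - 1 then x * y ^ (β i) else y ^ (β i)) : Multiset G) ∧
      (∀ i : ℕ, i < 2 * k - 1 → β i ≡ β 0 [ZMOD (n₁ : ℤ)]) ∧
      (∀ i : ℕ, 2 * k - 1 ≤ i → i < n₂ → β i ≡ 0 [ZMOD (n₁ : ℤ)]) ∧
      ∃ t : ℤ, β 0 + t * n₁ ≡ 0 [ZMOD (n₂ : ℤ)] ∧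
        piSet S = {x * y ^ (β 0 + t * n₁)} := by
  classical
  obtain ⟨p, hp⟩ := hsingle
  have hxx : x * x = 1 := by rw [← pow_two]; exact hx
  have hn0 : 0 < n := by omega
  have hn₁0 : 0 < n₁ := by
    rcases Nat.eq_zero_or_pos n₁ with h | h
    · exfalso; rw [h] at hfac; omega
    · exact h
  have hn₂0 : 0 < n₂ := by
    rcases Nat.eq_zero_or_pos n₂ with h | h
    · exfalso; rw [h] at hfac; omega
    · exact h
  have hodd₁ : Odd n₁ := (Nat.odd_mul.mp (hfac ▸ hodd)).1
  have hord : orderOf y = n := aux_order x y s n hn0 hcard hx hy hrel hgen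
  have hxny : x ∉ Subgroup.zpowers y := aux_xny x y s n hn0 hcard hx hy hrel hgen
  have hyinj : ∀ a b : ℤ, y ^ a = y ^ b → (n : ℤ) ∣ a - b := by
    intro a b h
    have h1 : y ^ (a - b) = 1 := by rw [zpow_sub, h, mul_inv_cancel]
    rw [← hord]
    exact_mod_cast orderOf_dvd_iff_zpow_eq_one.mpr h1
  have hn1dvd : (n₁ : ℤ) ∣ (n : ℤ) := by
    have : n₁ ∣ n := ⟨n₂, hfac⟩
    exact_mod_cast this
  have hn2dvd : (n₂ : ℤ) ∣ (n : ℤ) := by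
    refine ⟨(n₁ : ℤ), ?_⟩
    push_cast [hfac]; ring
  have hcop2 : IsCoprime (n₁ : ℤ) (2 : ℤ) := by
    have : Nat.Coprime n₁ 2 := (Nat.coprime_two_left.mpr hodd₁).symm
    exact_mod_cast Nat.isCoprime_iff_coprime.mpr this
  -- from n ∣ (s-1)*d, deduce n₁ ∣ d
  have hkey : ∀ d : ℤ, (n : ℤ) ∣ (s - 1) * d → (n₁ : ℤ) ∣ d := by
    intro d hd
    have h1 : (n₁ : ℤ) ∣ (s - 1) * d := dvd_trans hn1dvd hd
    have h2 : (s - 1) * d ≡ (-2) * d [ZMOD (n₁ : ℤ)] := (hs1.sub_right 1).mul_right d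
    have h3 : (n₁ : ℤ) ∣ (-2) * d := by
      have h4 : (-2) * d ≡ 0 [ZMOD (n₁ : ℤ)] := (h2.symm).trans (Int.modEq_zero_iff_dvd.mpr h1)
      exact Int.modEq_zero_iff_dvd.mp h4
    have h5 : (n₁ : ℤ) ∣ 2 * d := by
      have : (2 : ℤ) * d = -((-2) * d) := by ring
      rw [this]
      exact dvd_neg.mpr h3
    exact hcop2.dvd_of_dvd_mul_left h5
  -- basic multiplication rules
  have hmulxy : ∀ a b : ℤ, (x * y ^ a) * (y ^ b) = x * y ^ (a + b) := by
    intro a b; rw [mul_assoc, ← zpow_add]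
  have hmulyx : ∀ a b : ℤ, (y ^ b) * (x * y ^ a) = x * y ^ (s * b + a) := by
    intro a b; rw [← mul_assoc, aux_conj x y s hx hrel, mul_assoc, ← zpow_add]
  have hmulxx : ∀ a b : ℤ, (x * y ^ a) * (x * y ^ b) = y ^ (s * a + b) := by
    intro a b
    rw [mul_assoc, hmulyx b a, ← mul_assoc, hxx, one_mul]
  have hprodeq : ∀ l : List G, (l : Multiset G) = S → l.prod = p := by
    intro l hl
    have : l.prod ∈ piSet S := ⟨l, hl, rfl⟩
    rw [hp] at this; exact this
  have hcomm : ∀ g ∈ S, ∀ h ∈ S, g * h = h * g := by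
    intro g hg h hh
    by_cases hgh : g = h
    · rw [hgh]
    · have hh' : h ∈ S.erase g := (Multiset.mem_erase_of_ne (fun he => hgh he.symm)).mpr hh
      have hT : S = g ::ₘ h ::ₘ ((S.erase g).erase h) := by
        rw [Multiset.cons_erase hh', Multiset.cons_erase hg]
      have hco : ∀ g' h' : G, ((g' :: h' :: ((S.erase g).erase h).toList : List G) : Multiset G)
          = g' ::ₘ h' ::ₘ ((S.erase g).erase h) := by
        intro g' h'
        rw [← Multiset.cons_coe, ← Multiset.cons_coe, Multiset.coe_toList]
      have h1 := hprodeq (g :: h :: ((S.erase g).erase h).toList) (by rw [hco]; exact hT.symm)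
      have h2 := hprodeq (h :: g :: ((S.erase g).erase h).toList) (by
        rw [hco, Multiset.cons_swap]; exact hT.symm)
      simp only [List.prod_cons] at h1 h2
      rw [← mul_assoc] at h1 h2
      exact mul_right_cancel (h1.trans h2.symm)
  -- partition S
  set Sx := S.filter (fun g => g ∉ Subgroup.zpowers y) with hSxd
  set Sy := S.filter (fun g => g ∈ Subgroup.zpowers y) with hSyd
  have hsplit : Sx + Sy = S := by
    rw [hSxd, hSyd, add_comm]
    exact Multiset.filter_add_not _ S
  have hSxform : ∀ g ∈ Sx, ∃ a : ℤ, g = x * y ^ a := by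
    intro g hg
    have hg1 : g ∉ Subgroup.zpowers y := by
      have := (Multiset.mem_filter.mp hg).2
      simpa using this
    rcases aux_form x y s hx hrel hgen g with ⟨a, rfl⟩ | h
    · exact absurd (Subgroup.zpow_mem _ (Subgroup.mem_zpowers y) a) hg1
    · exact h
  have hSyform : ∀ g ∈ Sy, ∃ a : ℤ, g = y ^ a := by
    intro g hg
    have hg1 : g ∈ Subgroup.zpowers y := by
      have := (Multiset.mem_filter.mp hg).2
      simpa using this
    obtain ⟨a, ha⟩ := Subgroup.mem_zpowers_iff.mp hg1
    exact ⟨a, ha.symm⟩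
  set lx := Sx.toList with hlxd
  set ly := Sy.toList with hlyd
  set A := lx.map (fun g => if h : ∃ a : ℤ, g = x * y ^ a then h.choose else 0) with hAd
  set B := ly.map (fun g => if h : ∃ a : ℤ, g = y ^ a then h.choose else 0) with hBd
  have hlx : A.map (fun a => x * y ^ a) = lx := by
    rw [hAd, List.map_map]
    have h1 : ∀ g ∈ lx, ((fun a => x * y ^ a) ∘
        (fun g => if h : ∃ a : ℤ, g = x * y ^ a then h.choose else 0)) g = id g := by
      intro g hg
      have hg2 : ∃ a : ℤ, g = x * y ^ a := hSxform g (Multiset.mem_toList.mp hg)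
      simp only [Function.comp, dif_pos hg2, id]
      exact hg2.choose_spec.symm
    rw [List.map_congr_left h1, List.map_id]
  have hly : B.map (fun a => y ^ a) = ly := by
    rw [hBd, List.map_map]
    have h1 : ∀ g ∈ ly, ((fun a => y ^ a) ∘
        (fun g => if h : ∃ a : ℤ, g = y ^ a then h.choose else 0)) g = id g := by
      intro g hg
      have hg2 : ∃ a : ℤ, g = y ^ a := hSyform g (Multiset.mem_toList.mp hg)
      simp only [Function.comp, dif_pos hg2, id]
      exact hg2.choose_spec.symm
    rw [List.map_congr_left h1, List.map_id]
  have hlxlen : lx.length = A.length := by rw [← hlx, List.length_map]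
  have hlylen : ly.length = B.length := by rw [← hly, List.length_map]
  have hlen : A.length + B.length = n₂ := by
    rw [← hlxlen, ← hlylen, hlxd, hlyd, Multiset.length_toList, Multiset.length_toList,
      ← Multiset.card_add, hsplit, hS]
  have hmemSx : ∀ a ∈ A, x * y ^ a ∈ S := by
    intro a ha
    have h1 : x * y ^ a ∈ lx := by rw [← hlx]; exact List.mem_map_of_mem ha
    have h2 : x * y ^ a ∈ Sx := Multiset.mem_toList.mp h1
    exact Multiset.mem_of_mem_filter h2
  have hmemSy : ∀ b ∈ B, y ^ b ∈ S := by
    intro b hb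
    have h1 : y ^ b ∈ ly := by rw [← hly]; exact List.mem_map_of_mem hb
    have h2 : y ^ b ∈ Sy := Multiset.mem_toList.mp h1
    exact Multiset.mem_of_mem_filter h2
  have hAperm : ∀ a ∈ A, ∀ a' ∈ A, a ≡ a' [ZMOD (n₁ : ℤ)] := by
    intro a ha a' ha'
    have h3 := hcomm _ (hmemSx a ha) _ (hmemSx a' ha')
    rw [hmulxx, hmulxx] at h3
    have h4 := hyinj _ _ h3
    have h5 : (n : ℤ) ∣ (s - 1) * (a - a') := by
      have he : (s * a + a') - (s * a' + a) = (s - 1) * (a - a') := by ring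
      rwa [he] at h4
    have h6 := hkey _ h5
    rw [Int.modEq_iff_dvd]
    have he2 : a' - a = -(a - a') := by ring
    rw [he2]
    exact dvd_neg.mpr h6
  set α := A.getD 0 0 with hαd
  have hAα : ∀ a ∈ A, a ≡ α [ZMOD (n₁ : ℤ)] := by
    intro a ha
    have hne : A ≠ [] := List.ne_nil_of_mem ha
    have hl : 0 < A.length := List.length_pos_iff.mpr hne
    have hA0 : α ∈ A := by
      rw [hαd, List.getD_eq_getElem _ _ hl]
      exact List.getElem_mem _
    exact hAperm a ha α hA0
  obtain ⟨cA, hcA, hcAcong⟩ := aux_prodx x y s n₁ hs1 hx hrel α A hAα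
  have hSl : ((lx ++ ly : List G) : Multiset G) = S := by
    have : ((lx ++ ly : List G) : Multiset G) = (lx : Multiset G) + (ly : Multiset G) := by
      simp
    rw [this, hlxd, hlyd, Multiset.coe_toList, Multiset.coe_toList, hsplit]
  have hprod : p = x ^ A.length * y ^ (cA + B.sum) := by
    have h1 := hprodeq (lx ++ ly) hSl
    rw [List.prod_append, ← hlx, ← hly, hcA, aux_prody y B] at h1
    rw [← h1, mul_assoc, ← zpow_add]
  obtain ⟨h0, hh0, hph⟩ := hsub (by rw [hp]; exact rfl)
  obtain ⟨j, hj⟩ := Subgroup.mem_zpowers_iff.mp hh0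
  have hpxy : p = x * y ^ ((n₂ : ℤ) * j) := by
    simp only at hph
    rw [← hph, ← hj, ← zpow_natCast y n₂, ← zpow_mul]
  have hmodd : Odd A.length := by
    by_contra hev
    rw [Nat.not_odd_iff_even] at hev
    obtain ⟨r, hr⟩ := hev
    have hxm : x ^ A.length = 1 := by
      have h2 : A.length = 2 * r := by omega
      rw [h2, pow_mul, hx, one_pow]
    have h3 : x * y ^ ((n₂ : ℤ) * j) = y ^ (cA + B.sum) := by
      rw [← hpxy, hprod, hxm, one_mul]
    have hx2 : x = y ^ (cA + B.sum) * (y ^ ((n₂ : ℤ) * j))⁻¹ := by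
      rw [← h3]; group
    have hxmem : x ∈ Subgroup.zpowers y := by
      rw [hx2, ← zpow_neg, ← zpow_add]
      exact Subgroup.zpow_mem _ (Subgroup.mem_zpowers y) _
    exact hxny hxmem
  obtain ⟨r, hr⟩ := hmodd
  have hxm : x ^ A.length = x := by rw [hr, pow_succ, pow_mul, hx, one_pow, one_mul]
  have hpc : p = x * y ^ (cA + B.sum) := by rw [hprod, hxm]
  have hyceq : y ^ (cA + B.sum) = y ^ ((n₂ : ℤ) * j) := mul_left_cancel (hpc.symm.trans hpxy)
  have hc2 : (n₂ : ℤ) ∣ (cA + B.sum) := by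
    have h1 := hyinj _ _ hyceq
    have h2 : (n₂ : ℤ) ∣ (cA + B.sum) - (n₂ : ℤ) * j := dvd_trans hn2dvd h1
    have h3 : (n₂ : ℤ) ∣ (n₂ : ℤ) * j := Dvd.intro j rfl
    have h4 := dvd_add h2 h3
    simpa using h4
  have hApos : 0 < A.length := by omega
  have hA0mem : α ∈ A := by
    rw [hαd, List.getD_eq_getElem _ _ hApos]
    exact List.getElem_mem _
  have hB0 : ∀ b ∈ B, b ≡ 0 [ZMOD (n₁ : ℤ)] := by
    intro b hb
    have h3 := hcomm _ (hmemSx α hA0mem) _ (hmemSy b hb)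
    rw [hmulxy, hmulyx] at h3
    have h4 := hyinj _ _ (mul_left_cancel h3)
    have h5 : (n : ℤ) ∣ (s - 1) * b := by
      have he : (α + b) - (s * b + α) = -((s - 1) * b) := by ring
      rw [he] at h4
      exact dvd_neg.mp h4
    exact Int.modEq_zero_iff_dvd.mpr (hkey b h5)
  have hccong : cA + B.sum ≡ α [ZMOD (n₁ : ℤ)] := by
    rw [if_pos ⟨r, hr⟩] at hcAcong
    have hBsum : (n₁ : ℤ) ∣ B.sum :=
      List.dvd_sum (fun b hb => Int.modEq_zero_iff_dvd.mp (hB0 b hb))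
    calc cA + B.sum ≡ α + 0 [ZMOD (n₁ : ℤ)] :=
          Int.ModEq.add hcAcong (Int.modEq_zero_iff_dvd.mpr hBsum)
      _ = α := by ring
  have hkm : 2 * (r + 1) - 1 = A.length := by omega
  have ht : (n₁ : ℤ) ∣ cA + B.sum - α := (hccong.symm).dvd
  refine ⟨r + 1, by omega, by omega,
    fun i => if i < A.length then A.getD i 0 else B.getD (i - A.length) 0, ?_, ?_, ?_, ?_⟩
  · -- the sequence decomposition
    simp only [hkm]
    have key : (List.range n₂).map
        (fun i => if i < A.length then x * y ^ (if i < A.length then A.getD i 0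
          else B.getD (i - A.length) 0) else y ^ (if i < A.length then A.getD i 0
          else B.getD (i - A.length) 0))
        = A.map (fun a => x * y ^ a) ++ B.map (fun b => y ^ b) := by
      have hn2' : n₂ = A.length + B.length := hlen.symm
      rw [hn2', List.range_add, List.map_append]
      congr 1
      · rw [← aux_map_range (fun a => x * y ^ a) (0 : ℤ) A]
        apply List.map_congr_left
        intro i hi
        have hi' : i < A.length := List.mem_range.mp hi
        simp only [if_pos hi']
      · rw [List.map_map, ← aux_map_range (fun b => y ^ b) (0 : ℤ) B]
        apply List.map_congr_left
        intro i hi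
        have hi' : i < B.length := List.mem_range.mp hi
        have h1 : ¬ (A.length + i < A.length) := by omega
        have h2 : A.length + i - A.length = i := by omega
        simp only [Function.comp, if_neg h1, h2]
    rw [key, hlx, hly]
    exact hSl.symm
  · intro i hi
    rw [hkm] at hi
    simp only
    rw [if_pos hi, if_pos hApos]
    have hmem : A.getD i 0 ∈ A := by
      rw [List.getD_eq_getElem _ _ hi]
      exact List.getElem_mem _
    exact hAα _ hmem
  · intro i hi1 hi2
    rw [hkm] at hi1
    simp only
    rw [if_neg (not_lt.mpr hi1)]
    have hib : i - A.length < B.length := by omega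
    have hmem : B.getD (i - A.length) 0 ∈ B := by
      rw [List.getD_eq_getElem _ _ hib]
      exact List.getElem_mem _
    exact hB0 _ hmem
  · refine ⟨(cA + B.sum - α) / n₁, ?_, ?_⟩
    · have heq : (if (0 : ℕ) < A.length then A.getD 0 0 else B.getD (0 - A.length) 0)
          + ((cA + B.sum - α) / n₁) * n₁ = cA + B.sum := by
        rw [if_pos hApos, Int.ediv_mul_cancel ht, ← hαd]
        ring
      simp only
      rw [heq]
      exact Int.modEq_zero_iff_dvd.mpr hc2
    · have heq : (if (0 : ℕ) < A.length then A.getD 0 0 else B.getD (0 - A.length) 0)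
          + ((cA + B.sum - α) / n₁) * n₁ = cA + B.sum := by
        rw [if_pos hApos, Int.ediv_mul_cancel ht, ← hαd]
        ring
      simp only
      rw [heq, hp, hpc]
end

section
/- Let n ≥ 3 be an integer and let s be an integer with s² ≡ 1 (mod n). Then n admits a factorization n = n₁n₂ into positive integers n₁, n₂ such that s ≡ −1 (mod n₁), s ≡ 1 (mod n₂), and gcd(n₁, n₂) ∈ {1, 2}. -/
theorem stmt10 (n : ℕ) (hn : 3 ≤ n) (s : ℤ) (hs : s ^ 2 ≡ 1 [ZMOD (n : ℤ)]) :
    ∃ n₁ n₂ : ℕ, 0 < n₁ ∧ 0 < n₂ ∧ n = n₁ * n₂ ∧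
      s ≡ -1 [ZMOD (n₁ : ℤ)] ∧ s ≡ 1 [ZMOD (n₂ : ℤ)] ∧
      Nat.gcd n₁ n₂ ∈ ({1, 2} : Set ℕ) := by
  have hnpos : 0 < n := by omega
  set d : ℕ := Int.gcd (n : ℤ) (s + 1) with hd
  have hd1 : (d : ℤ) ∣ (s + 1) := Int.gcd_dvd_right (n : ℤ) (s + 1)
  have hdn : (d : ℤ) ∣ (n : ℤ) := Int.gcd_dvd_left (n : ℤ) (s + 1)
  have hdnn : d ∣ n := by exact_mod_cast hdn
  have hdpos : 0 < d := Nat.pos_of_dvd_of_pos hdnn hnpos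
  set e : ℕ := n / d with he
  have hne : n = d * e := (Nat.mul_div_cancel' hdnn).symm
  -- n ∣ (s+1)*(s-1)
  have hdiv : (n : ℤ) ∣ (s + 1) * (s - 1) := by
    have := hs.dvd
    have h2 : (s + 1) * (s - 1) = s ^ 2 - 1 := by ring
    rw [h2]
    simpa using (Int.ModEq.dvd hs.symm)
  -- Bezout: d = n*A + (s+1)*B
  have hbez : (d : ℤ) = (n : ℤ) * Int.gcdA (n : ℤ) (s + 1) + (s + 1) * Int.gcdB (n : ℤ) (s + 1) :=
    Int.gcd_eq_gcd_ab (n : ℤ) (s + 1)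
  have hkey : (n : ℤ) ∣ (d : ℤ) * (s - 1) := by
    have : (d : ℤ) * (s - 1) = (n : ℤ) * (Int.gcdA (n : ℤ) (s + 1) * (s - 1))
        + ((s + 1) * (s - 1)) * Int.gcdB (n : ℤ) (s + 1) := by
      rw [hbez]; ring
    rw [this]
    exact dvd_add (Dvd.intro _ rfl) (hdiv.mul_right _)
  have hes : (e : ℤ) ∣ (s - 1) := by
    have hn' : (n : ℤ) = (d : ℤ) * (e : ℤ) := by exact_mod_cast hne
    rw [hn'] at hkey
    have hd0 : (d : ℤ) ≠ 0 := by exact_mod_cast hdpos.ne'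
    exact (mul_dvd_mul_iff_left hd0).mp hkey
  have hepos : 0 < e := by
    rcases Nat.eq_zero_or_pos e with h | h
    · rw [h, mul_zero] at hne; omega
    · exact h
  refine ⟨d, e, hdpos, hepos, hne, ?_, ?_, ?_⟩
  · refine Int.modEq_iff_dvd.mpr ?_
    rw [show (-1 : ℤ) - s = -(s + 1) by ring]
    exact (dvd_neg).mpr hd1
  · exact (Int.modEq_iff_dvd.mpr (by simpa using hes)).symm
  · have hg2 : (Nat.gcd d e : ℤ) ∣ 2 := by
      have h1 : (Nat.gcd d e : ℤ) ∣ (s + 1) :=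
        dvd_trans (Int.natCast_dvd_natCast.mpr (Nat.gcd_dvd_left d e)) hd1
      have h2 : (Nat.gcd d e : ℤ) ∣ (s - 1) :=
        dvd_trans (Int.natCast_dvd_natCast.mpr (Nat.gcd_dvd_right d e)) hes
      have : (Nat.gcd d e : ℤ) ∣ (s + 1) - (s - 1) := dvd_sub h1 h2
      simpa using this
    have hg2' : Nat.gcd d e ∣ 2 := by exact_mod_cast hg2
    rcases (Nat.dvd_prime Nat.prime_two).mp hg2' with h | h
    · left; exact h
    · right; exact h
end

section
/- Let n ≥ 3 be an integer, let s be an integer with s² ≡ 1 (mod n), and write n = n₁n₂ with s ≡ −1 (mod n₁), s ≡ 1 (mod n₂) and gcd(n₁, n₂) = 1. Then the metacyclic group G = ⟨x, y : x² = yⁿ = 1_G, y x = x y^s⟩ of order 2n is isomorphic to the direct product C_{n₂} × D_{2n₁}; more precisely, G = ⟨y^{n₁}⟩ × ⟨x, y^{n₂}⟩, where ⟨y^{n₁}⟩ is cyclic of order n₂ and ⟨x, y^{n₂}⟩ is dihedral of order 2n₁. -/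
theorem stmt11 {G : Type*} [Group G] [Fintype G] (n n₁ n₂ : ℕ)
    (hn : 3 ≤ n) (s : ℤ) (hs : s ^ 2 ≡ 1 [ZMOD (n : ℤ)])
    (hfac : n = n₁ * n₂) (hs1 : s ≡ -1 [ZMOD (n₁ : ℤ)]) (hs2 : s ≡ 1 [ZMOD (n₂ : ℤ)])
    (hcop : Nat.gcd n₁ n₂ = 1)
    (x y : G) (hcard : Fintype.card G = 2 * n)
    (hx : x ^ 2 = 1) (hy : y ^ n = 1)
    (hgen : Subgroup.closure {x, y} = ⊤)
    (hrel : y * x = x * y ^ s) :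
    Nonempty (G ≃* Multiplicative (ZMod n₂) × DihedralGroup n₁) ∧
    Subgroup.zpowers (y ^ n₁) ⊓ Subgroup.closure {x, y ^ n₂} = ⊥ ∧
    Subgroup.zpowers (y ^ n₁) ⊔ Subgroup.closure {x, y ^ n₂} = ⊤ ∧
    (∀ a ∈ Subgroup.zpowers (y ^ n₁), ∀ b ∈ Subgroup.closure {x, y ^ n₂}, a * b = b * a) ∧
    Nat.card (Subgroup.zpowers (y ^ n₁)) = n₂ ∧
    Nat.card (Subgroup.closure {x, y ^ n₂}) = 2 * n₁ ∧
    Nonempty ((Subgroup.closure {x, y ^ n₂} : Subgroup G) ≃* DihedralGroup n₁) := by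
  -- positivity
  have hn₁pos : 0 < n₁ := Nat.pos_of_ne_zero (by rintro rfl; simp at hfac; omega)
  have hn₂pos : 0 < n₂ := Nat.pos_of_ne_zero (by rintro rfl; simp at hfac; omega)
  have : NeZero n₁ := ⟨hn₁pos.ne'⟩
  have : NeZero n₂ := ⟨hn₂pos.ne'⟩
  -- basic relations
  have hxx : x * x = 1 := by rw [← pow_two]; exact hx
  have hxinv : x⁻¹ = x := inv_eq_of_mul_eq_one_right hxx
  have hxyx : x * y * x = y ^ s := by
    have h : x⁻¹ * (y * x) = x⁻¹ * (x * y ^ s) := by rw [hrel]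
    rw [inv_mul_cancel_left, hxinv, ← mul_assoc] at h
    exact h
  have hconj : ∀ i : ℤ, x * y ^ i * x = y ^ (s * i) := by
    intro i
    have h := conj_zpow (i := i) (a := x) (b := y)
    rw [hxinv] at h
    rw [← h, hxyx, zpow_mul]
  have hyxi : ∀ i : ℤ, y ^ i * x = x * y ^ (s * i) := by
    intro i
    rw [← hconj i, ← mul_assoc, ← mul_assoc, hxx, one_mul]
  -- classification of elements
  have hcls : ∀ g : G, (∃ i : ℤ, g = y ^ i) ∨ (∃ i : ℤ, g = x * y ^ i) := by
    intro g
    have hg : g ∈ Subgroup.closure {x, y} := hgen ▸ Subgroup.mem_top g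
    refine Subgroup.closure_induction ?_ ?_ ?_ ?_ hg
    · rintro z hz
      rcases hz with rfl | rfl
      · exact Or.inr ⟨0, by simp⟩
      · exact Or.inl ⟨1, by simp⟩
    · exact Or.inl ⟨0, by simp⟩
    · rintro g h _ _ (⟨i, rfl⟩ | ⟨i, rfl⟩) (⟨j, rfl⟩ | ⟨j, rfl⟩)
      · exact Or.inl ⟨i + j, (zpow_add y i j).symm⟩
      · refine Or.inr ⟨s * i + j, ?_⟩
        rw [← mul_assoc, hyxi i, mul_assoc, ← zpow_add]
      · refine Or.inr ⟨i + j, ?_⟩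
        rw [mul_assoc, ← zpow_add]
      · refine Or.inl ⟨s * i + j, ?_⟩
        calc x * y ^ i * (x * y ^ j) = ((x * y ^ i) * x) * y ^ j := (mul_assoc _ _ _).symm
          _ = y ^ (s * i) * y ^ j := by rw [hconj i]
          _ = y ^ (s * i + j) := (zpow_add _ _ _).symm
    · rintro g _ (⟨i, rfl⟩ | ⟨i, rfl⟩)
      · exact Or.inl ⟨-i, (zpow_neg y i).symm⟩
      · refine Or.inr ⟨s * (-i), ?_⟩
        rw [mul_inv_rev, hxinv, ← zpow_neg, hyxi (-i)]
  -- order of y is n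
  have hypos : 0 < orderOf y := orderOf_pos y
  have horder : orderOf y = n := by
    have hdvd : orderOf y ∣ n := orderOf_dvd_of_pow_eq_one hy
    have hsurj : Function.Surjective
        (fun p : Bool × Fin (orderOf y) => (if p.1 then x else 1) * y ^ (p.2 : ℕ)) := by
      intro g
      have key : ∀ i : ℤ, ∃ k : Fin (orderOf y), y ^ (k : ℕ) = y ^ i := by
        intro i
        refine ⟨⟨(i % (orderOf y : ℤ)).toNat, ?_⟩, ?_⟩
        · have h1 : 0 ≤ i % (orderOf y : ℤ) := Int.emod_nonneg i (by exact_mod_cast hypos.ne')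
          have h2 : i % (orderOf y : ℤ) < orderOf y := Int.emod_lt_of_pos i (by exact_mod_cast hypos)
          omega
        · rw [← zpow_natCast, Int.toNat_of_nonneg (Int.emod_nonneg i (by exact_mod_cast hypos.ne'))]
          exact zpow_eq_zpow_iff_modEq.mpr (Int.emod_emod_of_dvd i dvd_rfl)
      rcases hcls g with ⟨i, rfl⟩ | ⟨i, rfl⟩
      · obtain ⟨k, hk⟩ := key i
        exact ⟨(false, k), by simpa using hk⟩
      · obtain ⟨k, hk⟩ := key i
        exact ⟨(true, k), by simpa using hk⟩
    have hle : Fintype.card G ≤ Fintype.card (Bool × Fin (orderOf y)) :=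
      Fintype.card_le_of_surjective _ hsurj
    simp [hcard] at hle
    have := Nat.le_of_dvd (by omega) hdvd
    omega
  -- x is not a power of y
  have hxny : x ∉ Subgroup.zpowers y := by
    intro hmem
    have htop : Subgroup.zpowers y = ⊤ := by
      rw [← hgen]
      refine le_antisymm ?_ ?_
      · rw [hgen]; exact le_top
      · rw [Subgroup.closure_le]
        rintro z (rfl | rfl)
        · exact hmem
        · exact Subgroup.mem_zpowers _
    have h1 : Nat.card (Subgroup.zpowers y) = n := by rw [Nat.card_zpowers, horder]
    rw [htop] at h1
    rw [Subgroup.card_top, Nat.card_eq_fintype_card, hcard] at h1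
    omega
  have hsep : ∀ i j : ℤ, x * y ^ i ≠ y ^ j := by
    intro i j h
    apply hxny
    refine Subgroup.mem_zpowers_iff.mpr ⟨j - i, ?_⟩
    rw [zpow_sub, ← h, mul_assoc, mul_inv_cancel, mul_one]
  -- orders of the two generators
  have horda : orderOf (y ^ n₁) = n₂ := by
    rw [orderOf_pow, horder, hfac]
    have : Nat.gcd (n₁ * n₂) n₁ = n₁ := Nat.gcd_eq_right ⟨n₂, rfl⟩
    rw [this, Nat.mul_div_cancel_left _ hn₁pos]
  have hordb : orderOf (y ^ n₂) = n₁ := by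
    rw [orderOf_pow, horder, hfac]
    have : Nat.gcd (n₁ * n₂) n₂ = n₂ := Nat.gcd_eq_right ⟨n₁, mul_comm _ _⟩
    rw [this, Nat.mul_div_cancel _ hn₂pos]
  -- divisibilities
  have hd1 : (n₁ : ℤ) ∣ s + 1 := by
    have := hs1.dvd
    simpa using (dvd_neg.mpr this)
  have hd2 : (n₂ : ℤ) ∣ s - 1 := by
    have := hs2.dvd
    simpa using (dvd_neg.mpr this)
  -- y ^ n₁ is central
  have hcent : ∀ g : G, Commute (y ^ n₁) g := by
    have hax : (y : G) ^ n₁ * x = x * y ^ n₁ := by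
      have h1 : (y : G) ^ (n₁ : ℤ) * x = x * y ^ (s * n₁) := hyxi n₁
      have h2 : (y : G) ^ (s * (n₁ : ℤ)) = y ^ (n₁ : ℤ) := by
        apply zpow_eq_zpow_iff_modEq.mpr
        rw [horder, Int.ModEq]
        apply Int.ModEq.symm
        apply (Int.modEq_iff_dvd).mpr
        have : ((n : ℕ) : ℤ) ∣ (n₁ : ℤ) * (s - 1) := by
          rw [hfac]
          push_cast
          exact mul_dvd_mul_left _ hd2
        calc ((n:ℕ):ℤ) ∣ (n₁ : ℤ) * (s - 1) := this
          _ = s * n₁ - n₁ := by ring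
      rw [← zpow_natCast y n₁, h1, h2]
    intro g
    rcases hcls g with ⟨i, rfl⟩ | ⟨i, rfl⟩
    · rw [← zpow_natCast y n₁]
      exact (Commute.refl y).zpow_zpow _ _
    · have h3 : Commute (y ^ n₁) (y ^ i) := by
        rw [← zpow_natCast y n₁]; exact (Commute.refl y).zpow_zpow _ _
      exact Commute.mul_right hax h3
  -- dihedral relations for b = y ^ n₂
  have hbconj : ∀ i : ℤ, x * ((y : G) ^ n₂) ^ i * x = ((y : G) ^ n₂) ^ (-i) := by
    intro i
    have h1 : ((y : G) ^ n₂) ^ i = y ^ ((n₂ : ℤ) * i) := by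
      rw [← zpow_natCast y n₂, ← zpow_mul]
    have h2 : ((y : G) ^ n₂) ^ (s * i) = ((y : G) ^ n₂) ^ (-i) := by
      apply zpow_eq_zpow_iff_modEq.mpr
      rw [hordb]
      apply (Int.modEq_iff_dvd).mpr
      have : (n₁ : ℤ) ∣ -((s + 1) * i) := dvd_neg.mpr (Dvd.dvd.mul_right hd1 i)
      calc (n₁ : ℤ) ∣ -((s + 1) * i) := this
        _ = -i - s * i := by ring
    rw [h1, hconj, ← h2]
    rw [← zpow_natCast y n₂, ← zpow_mul]
    congr 1
    ring
  have hbxi : ∀ i : ℤ, ((y : G) ^ n₂) ^ i * x = x * ((y : G) ^ n₂) ^ (-i) := by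
    intro i
    rw [← hbconj i, ← mul_assoc, ← mul_assoc, hxx, one_mul]
  have hsep2 : ∀ i j : ℤ, x * ((y : G) ^ n₂) ^ i ≠ ((y : G) ^ n₂) ^ j := by
    intro i j h
    rw [← zpow_natCast y n₂, ← zpow_mul, ← zpow_mul] at h
    exact hsep _ _ h
  -- classification of elements of H
  have hHmem : ∀ g : G, g ∈ Subgroup.closure {x, y ^ n₂} ↔
      ((∃ i : ℤ, g = ((y : G) ^ n₂) ^ i) ∨ (∃ i : ℤ, g = x * ((y : G) ^ n₂) ^ i)) := by
    intro g
    constructor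
    · intro hg
      refine Subgroup.closure_induction ?_ ?_ ?_ ?_ hg
      · rintro z hz
        rcases hz with rfl | rfl
        · exact Or.inr ⟨0, by simp⟩
        · exact Or.inl ⟨1, by simp⟩
      · exact Or.inl ⟨0, by simp⟩
      · rintro g h _ _ (⟨i, rfl⟩ | ⟨i, rfl⟩) (⟨j, rfl⟩ | ⟨j, rfl⟩)
        · exact Or.inl ⟨i + j, (zpow_add _ i j).symm⟩
        · refine Or.inr ⟨-i + j, ?_⟩
          rw [← mul_assoc, hbxi i, mul_assoc, ← zpow_add]
        · exact Or.inr ⟨i + j, by rw [mul_assoc, ← zpow_add]⟩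
        · refine Or.inl ⟨-i + j, ?_⟩
          calc x * ((y:G)^n₂) ^ i * (x * ((y:G)^n₂) ^ j)
              = ((x * ((y:G)^n₂) ^ i) * x) * ((y:G)^n₂) ^ j := (mul_assoc _ _ _).symm
            _ = ((y:G)^n₂) ^ (-i) * ((y:G)^n₂) ^ j := by rw [hbconj i]
            _ = ((y:G)^n₂) ^ (-i + j) := (zpow_add _ _ _).symm
      · rintro g _ (⟨i, rfl⟩ | ⟨i, rfl⟩)
        · exact Or.inl ⟨-i, (zpow_neg _ i).symm⟩
        · refine Or.inr ⟨i, ?_⟩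
          rw [mul_inv_rev, hxinv, ← zpow_neg, hbxi (-i), neg_neg]
    · have hxH : x ∈ Subgroup.closure {x, (y:G) ^ n₂} :=
        Subgroup.subset_closure (by simp)
      have hbH : (y:G) ^ n₂ ∈ Subgroup.closure {x, (y:G) ^ n₂} :=
        Subgroup.subset_closure (by simp)
      rintro (⟨i, rfl⟩ | ⟨i, rfl⟩)
      · exact zpow_mem hbH i
      · exact mul_mem hxH (zpow_mem hbH i)
  -- helper lemmas for powers indexed by ZMod n₁
  have hBadd : ∀ i j : ZMod n₁, ((y:G) ^ n₂) ^ (i + j).val = ((y:G) ^ n₂) ^ i.val * ((y:G) ^ n₂) ^ j.val := by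
    intro i j
    rw [← pow_add]
    apply pow_eq_pow_iff_modEq.mpr
    rw [hordb, ZMod.val_add]
    exact Nat.mod_modEq _ _
  have hBzero : ((y:G) ^ n₂) ^ (0 : ZMod n₁).val = 1 := by simp
  have hBneg : ∀ i : ZMod n₁, ((y:G) ^ n₂) ^ (-i).val = (((y:G) ^ n₂) ^ i.val)⁻¹ := by
    intro i
    have h := hBadd i (-i)
    rw [add_neg_cancel, hBzero] at h
    exact (inv_eq_of_mul_eq_one_right h.symm).symm
  have hBx : ∀ i : ZMod n₁, ((y:G) ^ n₂) ^ i.val * x = x * ((y:G) ^ n₂) ^ (-i).val := by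
    intro i
    have h := hbxi (i.val : ℤ)
    rw [zpow_natCast] at h
    rw [h, hBneg, zpow_neg, zpow_natCast]
  have hBone : ((y:G) ^ n₂) ^ (1 : ZMod n₁).val = (y:G) ^ n₂ := by
    rw [ZMod.val_one_eq_one_mod, ← hordb, pow_mod_orderOf, pow_one]
  -- the dihedral monoid hom
  let ψ : DihedralGroup n₁ →* G :=
    { toFun := fun g => DihedralGroup.casesOn (motive := fun _ => G) g
        (fun i => ((y:G) ^ n₂) ^ i.val) (fun i => x * ((y:G) ^ n₂) ^ i.val)
      map_one' := hBzero
      map_mul' := by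
        rintro (i | i) (j | j)
        · exact hBadd i j
        · show x * ((y:G)^n₂) ^ (j - i).val = ((y:G)^n₂) ^ i.val * (x * ((y:G)^n₂) ^ j.val)
          calc x * ((y:G)^n₂) ^ (j - i).val = x * ((y:G)^n₂) ^ (-i + j).val := by
                rw [sub_eq_neg_add]
            _ = x * (((y:G)^n₂) ^ (-i).val * ((y:G)^n₂) ^ j.val) := by rw [hBadd]
            _ = (x * ((y:G)^n₂) ^ (-i).val) * ((y:G)^n₂) ^ j.val := (mul_assoc _ _ _).symm
            _ = (((y:G)^n₂) ^ i.val * x) * ((y:G)^n₂) ^ j.val := by rw [hBx]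
            _ = ((y:G)^n₂) ^ i.val * (x * ((y:G)^n₂) ^ j.val) := mul_assoc _ _ _
        · show x * ((y:G)^n₂) ^ (i + j).val = (x * ((y:G)^n₂) ^ i.val) * ((y:G)^n₂) ^ j.val
          rw [hBadd, mul_assoc]
        · show ((y:G)^n₂) ^ (j - i).val = (x * ((y:G)^n₂) ^ i.val) * (x * ((y:G)^n₂) ^ j.val)
          calc ((y:G)^n₂) ^ (j - i).val = ((y:G)^n₂) ^ (-i + j).val := by rw [sub_eq_neg_add]
            _ = ((y:G)^n₂) ^ (-i).val * ((y:G)^n₂) ^ j.val := hBadd _ _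
            _ = (x * (x * ((y:G)^n₂) ^ (-i).val)) * ((y:G)^n₂) ^ j.val := by
                rw [← mul_assoc, hxx, one_mul]
            _ = (x * (((y:G)^n₂) ^ i.val * x)) * ((y:G)^n₂) ^ j.val := by rw [hBx]
            _ = (x * ((y:G)^n₂) ^ i.val) * (x * ((y:G)^n₂) ^ j.val) := by
                rw [← mul_assoc, ← mul_assoc, mul_assoc _ x _] }
  have hψr : ∀ i : ZMod n₁, ψ (DihedralGroup.r i) = ((y:G) ^ n₂) ^ i.val := fun _ => rfl
  have hψsr : ∀ i : ZMod n₁, ψ (DihedralGroup.sr i) = x * ((y:G) ^ n₂) ^ i.val := fun _ => rfl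
  -- injectivity
  have hvaleq : ∀ i j : ZMod n₁, ((y:G) ^ n₂) ^ i.val = ((y:G) ^ n₂) ^ j.val → i = j := by
    intro i j h
    have := pow_eq_pow_iff_modEq.mp h
    rw [hordb, Nat.ModEq, Nat.mod_eq_of_lt (ZMod.val_lt i), Nat.mod_eq_of_lt (ZMod.val_lt j)] at this
    exact ZMod.val_injective n₁ this
  have hψinj : Function.Injective ψ := by
    rintro (i | i) (j | j) h
    · rw [hψr, hψr] at h
      exact congrArg _ (hvaleq _ _ h)
    · rw [hψr, hψsr] at h
      exact absurd (by
        rw [← zpow_natCast ((y:G)^n₂) i.val, ← zpow_natCast ((y:G)^n₂) j.val] at h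
        exact h.symm) (hsep2 _ _)
    · rw [hψr, hψsr] at h
      exact absurd (by
        rw [← zpow_natCast ((y:G)^n₂) i.val, ← zpow_natCast ((y:G)^n₂) j.val] at h
        exact h) (hsep2 _ _)
    · rw [hψsr, hψsr] at h
      exact congrArg _ (hvaleq _ _ (mul_left_cancel h))
  -- range of ψ is H
  have hψrange : ψ.range = Subgroup.closure {x, y ^ n₂} := by
    apply le_antisymm
    · rintro g ⟨d, rfl⟩
      rcases d with i | i
      · rw [hψr]
        exact pow_mem (Subgroup.subset_closure (by simp)) _
      · rw [hψsr]
        exact mul_mem (Subgroup.subset_closure (by simp))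
          (pow_mem (Subgroup.subset_closure (by simp)) _)
    · rw [Subgroup.closure_le]
      rintro z (rfl | rfl)
      · exact ⟨DihedralGroup.sr 0, by rw [hψsr, hBzero, mul_one]⟩
      · exact ⟨DihedralGroup.r 1, by rw [hψr, hBone]⟩
  have eH : (Subgroup.closure {x, y ^ n₂} : Subgroup G) ≃* DihedralGroup n₁ :=
    (MulEquiv.subgroupCongr hψrange.symm).trans (MonoidHom.ofInjective hψinj).symm
  have cardH : Nat.card (Subgroup.closure {x, y ^ n₂} : Subgroup G) = 2 * n₁ := by
    rw [Nat.card_congr eH.toEquiv, DihedralGroup.nat_card]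
  have cardA : Nat.card (Subgroup.zpowers ((y:G) ^ n₁)) = n₂ := by
    rw [Nat.card_zpowers, horda]
  -- intersection is trivial
  have hinf : Subgroup.zpowers (y ^ n₁) ⊓ Subgroup.closure {x, y ^ n₂} = ⊥ := by
    rw [Subgroup.eq_bot_iff_forall]
    intro g hg
    rw [Subgroup.mem_inf] at hg
    obtain ⟨hga, hgh⟩ := hg
    obtain ⟨k, hk⟩ := Subgroup.mem_zpowers_iff.mp hga
    rcases (hHmem g).mp hgh with ⟨i, rfl⟩ | ⟨i, rfl⟩
    · have hzz : (y:G) ^ ((n₁:ℤ) * k) = y ^ ((n₂:ℤ) * i) := by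
        rw [zpow_mul, zpow_mul, zpow_natCast, zpow_natCast, hk]
      have hmod := zpow_eq_zpow_iff_modEq.mp hzz
      rw [horder] at hmod
      have h1 : ((n:ℕ):ℤ) ∣ (n₂:ℤ) * i - (n₁:ℤ) * k := hmod.dvd
      have h2 : (n₁:ℤ) ∣ ((n:ℕ):ℤ) := by
        rw [hfac]; push_cast; exact Dvd.intro _ rfl
      have hdvd : (n₁ : ℤ) ∣ (n₂:ℤ) * i := by
        have h3 : (n₁:ℤ) ∣ (n₂:ℤ) * i - (n₁:ℤ) * k := h2.trans h1
        have h4 : (n₁:ℤ) ∣ (n₁:ℤ) * k := Dvd.intro _ rfl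
        simpa using dvd_add h3 h4
      have hcop' : IsCoprime (n₁:ℤ) (n₂:ℤ) := Nat.isCoprime_iff_coprime.mpr hcop
      have hdi : (n₁:ℤ) ∣ i := hcop'.dvd_of_dvd_mul_left hdvd
      apply orderOf_dvd_iff_zpow_eq_one.mp
      rw [hordb]
      exact hdi
    · exact absurd (by
        rw [zpow_mul, zpow_mul, zpow_natCast, zpow_natCast, hk] :
          x * (y:G) ^ ((n₂:ℤ) * i) = y ^ ((n₁:ℤ) * k)) (hsep _ _)
  -- join is everything
  have hsup : Subgroup.zpowers (y ^ n₁) ⊔ Subgroup.closure {x, y ^ n₂} = ⊤ := by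
    rw [← hgen]
    apply le_antisymm
    · apply sup_le
      · rw [Subgroup.zpowers_le]
        exact pow_mem (Subgroup.subset_closure (by simp)) _
      · rw [Subgroup.closure_le]
        rintro z (rfl | rfl)
        · exact Subgroup.subset_closure (by simp)
        · exact pow_mem (Subgroup.subset_closure (by simp)) _
    · have hbez : (n₁:ℤ) * Nat.gcdA n₁ n₂ + (n₂:ℤ) * Nat.gcdB n₁ n₂ = 1 := by
        have := Nat.gcd_eq_gcd_ab n₁ n₂
        rw [hcop] at this
        push_cast at this ⊢
        omega
      have hyeq : y = (y ^ n₁ : G) ^ (Nat.gcdA n₁ n₂) * (y ^ n₂ : G) ^ (Nat.gcdB n₁ n₂) := by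
        rw [← zpow_natCast y n₁, ← zpow_natCast y n₂, ← zpow_mul, ← zpow_mul, ← zpow_add,
          hbez, zpow_one]
      have hymem : y ∈ Subgroup.zpowers (y ^ n₁) ⊔ Subgroup.closure {x, y ^ n₂} := by
        have h := mul_mem
          (Subgroup.mem_sup_left (T := Subgroup.closure {x, y ^ n₂})
            (zpow_mem (Subgroup.mem_zpowers ((y:G) ^ n₁)) (Nat.gcdA n₁ n₂)))
          (Subgroup.mem_sup_right (S := Subgroup.zpowers ((y:G) ^ n₁))
            (zpow_mem (Subgroup.subset_closure (by simp : (y:G) ^ n₂ ∈ ({x, y ^ n₂} : Set G)))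
              (Nat.gcdB n₁ n₂)))
        rwa [← hyeq] at h
      rw [Subgroup.closure_le]
      rintro z (rfl | hz)
      · exact Subgroup.mem_sup_right (Subgroup.subset_closure (by simp))
      · exact hz ▸ hymem
  -- commuting
  have hcomm : ∀ a ∈ Subgroup.zpowers (y ^ n₁), ∀ b ∈ Subgroup.closure {x, y ^ n₂},
      a * b = b * a := by
    intro a ha b _
    obtain ⟨k, hk⟩ := Subgroup.mem_zpowers_iff.mp ha
    rw [← hk]
    exact ((hcent b).zpow_left k)
  -- the product map
  have hcommAB : ∀ (p : Subgroup.zpowers ((y:G) ^ n₁)) (q : (Subgroup.closure {x, (y:G) ^ n₂} : Subgroup G)),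
      Commute ((Subgroup.zpowers ((y:G)^n₁)).subtype p)
        ((Subgroup.closure {x, (y:G)^n₂}).subtype q) :=
    fun p q => hcomm p p.2 q q.2
  let φ : (Subgroup.zpowers ((y:G)^n₁)) × (Subgroup.closure {x, (y:G)^n₂} : Subgroup G) →* G :=
    MonoidHom.noncommCoprod (Subgroup.zpowers ((y:G)^n₁)).subtype
      (Subgroup.closure {x, (y:G)^n₂}).subtype hcommAB
  have hφinj : Function.Injective φ := by
    rw [injective_iff_map_eq_one]
    rintro ⟨p, q⟩ hpq
    have hpq' : (p : G) * q = 1 := hpq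
    have hp : (p:G) = (q:G)⁻¹ := eq_inv_of_mul_eq_one_left hpq'
    have hqinv : ((q:G))⁻¹ ∈ Subgroup.closure {x, (y:G)^n₂} := inv_mem q.2
    have hpmem : (p:G) ∈ Subgroup.zpowers ((y:G)^n₁) ⊓ Subgroup.closure {x, (y:G)^n₂} :=
      Subgroup.mem_inf.mpr ⟨p.2, hp ▸ hqinv⟩
    rw [hinf] at hpmem
    have hp1 : (p:G) = 1 := hpmem
    have hq1 : (q:G) = 1 := by
      rw [hp1] at hp
      rw [← inv_inv (q:G), ← hp, inv_one]
    exact Prod.ext (Subtype.ext hp1) (Subtype.ext hq1)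
  have hφbij : Function.Bijective φ := by
    refine (Nat.bijective_iff_injective_and_card φ).mpr ⟨hφinj, ?_⟩
    rw [Nat.card_prod, cardA, cardH, Nat.card_eq_fintype_card, hcard, hfac]
    ring
  have instA : IsCyclic (Subgroup.zpowers ((y:G)^n₁)) := by
    refine ⟨⟨⟨(y:G)^n₁, Subgroup.mem_zpowers _⟩, ?_⟩⟩
    rintro ⟨g, hg⟩
    obtain ⟨k, hk⟩ := Subgroup.mem_zpowers_iff.mp hg
    refine Subgroup.mem_zpowers_iff.mpr ⟨k, ?_⟩
    exact Subtype.ext (by rw [SubgroupClass.coe_zpow]; exact hk)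
  have cardM : Nat.card (Multiplicative (ZMod n₂)) = n₂ := by
    rw [Nat.card_eq_fintype_card, Fintype.card_multiplicative, ZMod.card]
  have eA : (Subgroup.zpowers ((y:G)^n₁)) ≃* Multiplicative (ZMod n₂) :=
    mulEquivOfCyclicCardEq (by rw [cardA, cardM])
  exact ⟨⟨(MulEquiv.ofBijective φ hφbij).symm.trans (eA.prodCongr eH)⟩,
    hinf, hsup, hcomm, cardA, cardH, ⟨eH⟩⟩
end

section
/- Let n ≥ 2 be an integer and let S be a sequence over the cyclic group C_n of length 3n − 1. Then S has two disjoint n-product-one subsequences, i.e., there exist sub-multisets T₁ and T₂ of S with T₁·T₂ a sub-multiset of S, |T₁| = |T₂| = n, and σ(T₁) = σ(T₂) = 1. In particular, S has a 2n-product-one subsequence. -/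
/-!
Apply the Erdős–Ginzburg–Ziv theorem twice: a sequence of length `3n - 1` over `C_n` contains an
`n`-product-one subsequence `T₁`, and what remains has length `2n - 1`, so it contains another one.
-/

open Multiplicative

namespace IsCyclic

variable {G : Type*} [CommGroup G]

theorem exists_le_card_eq_prod_eq_one (hG : IsCyclic G) {S : Multiset G}
    (hS : 2 * Nat.card G - 1 ≤ Multiset.card S) :
    ∃ T ≤ S, Multiset.card T = Nat.card G ∧ T.prod = 1 := by
  set e := zmodCyclicMulEquiv hG
  obtain ⟨t, hts, htcard, htsum⟩ :=
    ZMod.erdos_ginzburg_ziv_multiset (S.map (toAdd ∘ e.symm)) (by simpa using hS)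
  refine ⟨t.map (e ∘ ofAdd), ?_, by simpa using htcard, ?_⟩
  · simpa [Multiset.map_map, Function.comp_def] using Multiset.map_le_map (f := e ∘ ofAdd) hts
  · rw [← Multiset.map_map, ← map_multiset_prod, ← ofAdd_multiset_prod, htsum, ofAdd_zero,
      map_one]

theorem exists_two_disjoint_card_eq_prod_eq_one (hG : IsCyclic G) {S : Multiset G}
    (hS : 3 * Nat.card G - 1 ≤ Multiset.card S) :
    ∃ T₁ T₂ : Multiset G, T₁ + T₂ ≤ S ∧ Multiset.card T₁ = Nat.card G ∧
      Multiset.card T₂ = Nat.card G ∧ T₁.prod = 1 ∧ T₂.prod = 1 := by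
  classical
  obtain ⟨T₁, hT₁S, hT₁card, hT₁prod⟩ := hG.exists_le_card_eq_prod_eq_one (S := S) (by omega)
  have hrest : 2 * Nat.card G - 1 ≤ Multiset.card (S - T₁) := by
    rw [Multiset.card_sub hT₁S, hT₁card]; omega
  obtain ⟨T₂, hT₂S, hT₂card, hT₂prod⟩ := hG.exists_le_card_eq_prod_eq_one hrest
  exact ⟨T₁, T₂, add_le_of_le_tsub_left_of_le hT₁S hT₂S, hT₁card, hT₂card, hT₁prod, hT₂prod⟩

end IsCyclic

theorem stmt12_general {G : Type*} [CommGroup G] [Fintype G] (n : ℕ)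
    (hcyc : IsCyclic G) (hcard : Fintype.card G = n)
    (S : Multiset G) (hS : Multiset.card S = 3 * n - 1) :
    (∃ T₁ T₂ : Multiset G, T₁ + T₂ ≤ S ∧
        Multiset.card T₁ = n ∧ Multiset.card T₂ = n ∧ T₁.prod = 1 ∧ T₂.prod = 1) ∧
    (∃ T ≤ S, Multiset.card T = 2 * n ∧ T.prod = 1) := by
  rw [← Nat.card_eq_fintype_card] at hcard
  subst hcard
  obtain ⟨T₁, T₂, hle, hT₁card, hT₂card, hT₁prod, hT₂prod⟩ :=
    hcyc.exists_two_disjoint_card_eq_prod_eq_one hS.ge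
  refine ⟨⟨T₁, T₂, hle, hT₁card, hT₂card, hT₁prod, hT₂prod⟩, T₁ + T₂, hle, ?_, ?_⟩
  · rw [Multiset.card_add, hT₁card, hT₂card, two_mul]
  · rw [Multiset.prod_add, hT₁prod, hT₂prod, one_mul]

theorem stmt12 {G : Type*} [CommGroup G] [Fintype G] (n : ℕ) (hn : 2 ≤ n)
    (hcyc : IsCyclic G) (hcard : Fintype.card G = n)
    (S : Multiset G) (hS : Multiset.card S = 3 * n - 1) :
    (∃ T₁ T₂ : Multiset G, T₁ + T₂ ≤ S ∧
        Multiset.card T₁ = n ∧ Multiset.card T₂ = n ∧ T₁.prod = 1 ∧ T₂.prod = 1) ∧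
    (∃ T ≤ S, Multiset.card T = 2 * n ∧ T.prod = 1) :=
  stmt12_general n hcyc hcard S hS
end
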